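/- arXiv:2602.02712 — 3 statements merged into one kernel-verified Lean document; each statement's English description precedes it below -/
import Mathlib

section
/- Bump behavior: let p be a strictly positive probability vector on [V] and m ∈ R^V not constant. Fix z with min_w m_w < m_z < max_w m_w. Define Δ(α) = q_α(z) − p(z) where q_α is the exponential tilting of p by α m. Then there exists a unique α* ∈ R such that Δ is strictly increasing on (−∞, α*] and decreasing on [α*, +∞); moreover α* is the unique solution of E_{Z∼q_{α*}}[m_Z] = m_z. -/
set_option maxHeartbeats 1000000 in
/-- Bump behavior of the probability increase for intermediate tokens. -/
theorem bump_behavior (V : ℕ) (hV : 2 ≤ V) (p m : Fin V → ℝ)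
    (hp : ∀ z, 0 < p z) (hsum : ∑ z, p z = 1)
    (hm : ¬ ∀ z z', m z = m z') (z : Fin V)
    (hzu : ∃ w, m z < m w) (hzl : ∃ w, m w < m z) :
    let q : ℝ → Fin V → ℝ :=
      fun β w => p w * Real.exp (β * m w) / (∑ z', p z' * Real.exp (β * m z'))
    let Δ : ℝ → ℝ := fun β => q β z - p z
    let E : ℝ → ℝ := fun β => ∑ w, q β w * m w
    ∃! αstar : ℝ, (StrictMonoOn Δ (Set.Iic αstar) ∧ AntitoneOn Δ (Set.Ici αstar)) ∧
      (∀ β, E β = m z ↔ β = αstar) := by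
  intro q Δ E
  obtain ⟨w0, hw0⟩ := hzu
  obtain ⟨w1, hw1⟩ := hzl
  push_neg at hm
  obtain ⟨a, b, hab⟩ := hm
  have hne : Nonempty (Fin V) := ⟨⟨0, by omega⟩⟩
  set S : ℝ → ℝ := fun β => ∑ w, p w * Real.exp (β * m w) with hS_def
  set T : ℝ → ℝ := fun β => ∑ w, p w * m w * Real.exp (β * m w) with hT_def
  set U : ℝ → ℝ := fun β => ∑ w, p w * m w ^ 2 * Real.exp (β * m w) with hU_def
  have hSpos : ∀ β, 0 < S β := fun β =>
    Finset.sum_pos (fun w _ => mul_pos (hp w) (Real.exp_pos _)) Finset.univ_nonempty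
  have hterm : ∀ (w : Fin V) (β : ℝ), HasDerivAt (fun β => p w * Real.exp (β * m w))
      (p w * m w * Real.exp (β * m w)) β := by
    intro w β
    have h := ((hasDerivAt_mul_const (x := β) (m w)).exp).const_mul (p w)
    exact h.congr_deriv (by ring)
  have hterm2 : ∀ (w : Fin V) (β : ℝ), HasDerivAt (fun β => p w * m w * Real.exp (β * m w))
      (p w * m w ^ 2 * Real.exp (β * m w)) β := by
    intro w β
    have h := ((hasDerivAt_mul_const (x := β) (m w)).exp).const_mul (p w * m w)
    exact h.congr_deriv (by ring)
  have hSd : ∀ β, HasDerivAt S (T β) β := fun β => HasDerivAt.fun_sum fun w _ => hterm w β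
  have hTd : ∀ β, HasDerivAt T (U β) β := fun β => HasDerivAt.fun_sum fun w _ => hterm2 w β
  have hE_eq : ∀ β, E β = T β / S β := by
    intro β
    show (∑ w, p w * Real.exp (β * m w) / S β * m w) = T β / S β
    rw [hT_def]
    rw [Finset.sum_div]
    exact Finset.sum_congr rfl fun w _ => by ring
  have hEd : ∀ β, HasDerivAt E (U β / S β - (T β / S β) ^ 2) β := by
    intro β
    have h : HasDerivAt (fun β => T β / S β) ((U β * S β - T β * T β) / (S β) ^ 2) β :=
      (hTd β).div (hSd β) (hSpos β).ne'
    have hEf : E = fun β => T β / S β := funext hE_eq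
    rw [hEf]
    convert h using 1
    have := (hSpos β).ne'
    field_simp
  have hVar : ∀ β, 0 < U β / S β - (T β / S β) ^ 2 := by
    intro β
    set e := T β / S β with he
    have heS : e * S β = T β := div_mul_cancel₀ _ (hSpos β).ne'
    have expand : ∑ w, p w * Real.exp (β * m w) * (m w - e) ^ 2 = U β - e ^ 2 * S β := by
      have h1 : ∀ w : Fin V, p w * Real.exp (β * m w) * (m w - e) ^ 2 =
          p w * m w ^ 2 * Real.exp (β * m w) - 2 * e * (p w * m w * Real.exp (β * m w))
          + e ^ 2 * (p w * Real.exp (β * m w)) := fun w => by ring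
      rw [Finset.sum_congr rfl fun w _ => h1 w, Finset.sum_add_distrib,
        Finset.sum_sub_distrib, ← Finset.mul_sum, ← Finset.mul_sum]
      show U β - 2 * e * T β + e ^ 2 * S β = U β - e ^ 2 * S β
      rw [← heS]; ring
    have hpos : 0 < ∑ w, p w * Real.exp (β * m w) * (m w - e) ^ 2 := by
      have key : m a ≠ e ∨ m b ≠ e := by
        by_contra h; push_neg at h; exact hab (h.1.trans h.2.symm)
      have hterm_pos : ∀ c : Fin V, m c ≠ e → 0 < p c * Real.exp (β * m c) * (m c - e) ^ 2 := by
        intro c hc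
        have h0 : m c - e ≠ 0 := sub_ne_zero.mpr hc
        exact mul_pos (mul_pos (hp c) (Real.exp_pos _)) (pow_two_pos_of_ne_zero h0)
      have hnn : ∀ w ∈ Finset.univ, 0 ≤ p w * Real.exp (β * m w) * (m w - e) ^ 2 := fun w _ =>
        mul_nonneg (mul_pos (hp w) (Real.exp_pos _)).le (sq_nonneg _)
      obtain hc | hc := key
      · exact Finset.sum_pos' hnn ⟨a, Finset.mem_univ a, hterm_pos a hc⟩
      · exact Finset.sum_pos' hnn ⟨b, Finset.mem_univ b, hterm_pos b hc⟩
    have h2 : 0 < U β - e ^ 2 * S β := expand ▸ hpos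
    have heq : U β / S β - e ^ 2 = (U β - e ^ 2 * S β) / S β := by
      rw [sub_div, mul_div_assoc, div_self (hSpos β).ne', mul_one]
    rw [heq]
    exact div_pos h2 (hSpos β)
  have hEmono : StrictMono E :=
    strictMono_of_deriv_pos (fun β => by rw [(hEd β).deriv]; exact hVar β)
  have hEdiff : Differentiable ℝ E := fun β => (hEd β).differentiableAt
  have hEcont : Continuous E := hEdiff.continuous
  have hS0 : S 0 = 1 := by
    show (∑ w, p w * Real.exp (0 * m w)) = 1
    simp only [zero_mul, Real.exp_zero, mul_one]
    exact hsum
  have hb2 : ∃ β, m z < E β := by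
    by_contra hcon
    push_neg at hcon
    have hg : ∀ β, HasDerivAt (fun β => Real.log (S β) - β * m z) (E β - m z) β := by
      intro β
      have h := ((hSd β).log (hSpos β).ne').fun_sub ((hasDerivAt_id β).mul_const (m z))
      rw [hE_eq β]
      simpa using h
    have hanti : Antitone (fun β => Real.log (S β) - β * m z) := by
      apply antitone_of_deriv_nonpos
      · exact fun β => (hg β).differentiableAt
      · intro β
        rw [(hg β).deriv]
        linarith [hcon β]
    have hd : 0 < m w0 - m z := sub_pos.mpr hw0
    set β2 := max 0 ((1 - Real.log (p w0)) / (m w0 - m z)) with hβ2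
    have h1 : Real.log (S β2) - β2 * m z ≤ 0 := by
      have := hanti (le_max_left 0 ((1 - Real.log (p w0)) / (m w0 - m z)))
      simpa [hS0] using this
    have h2 : p w0 * Real.exp (β2 * m w0) ≤ S β2 := by
      show _ ≤ ∑ w, p w * Real.exp (β2 * m w)
      exact Finset.single_le_sum (f := fun w => p w * Real.exp (β2 * m w))
        (fun w _ => le_of_lt (mul_pos (hp w) (Real.exp_pos _))) (Finset.mem_univ w0)
    have h3 : Real.log (p w0) + β2 * m w0 ≤ Real.log (S β2) := by
      have hlog := Real.log_le_log (mul_pos (hp w0) (Real.exp_pos _)) h2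
      rwa [Real.log_mul (hp w0).ne' (Real.exp_pos _).ne', Real.log_exp] at hlog
    have h4 : 1 - Real.log (p w0) ≤ β2 * (m w0 - m z) :=
      (div_le_iff₀ hd).mp (le_max_right _ _)
    nlinarith [h1, h3, h4]
  have hb1 : ∃ β, E β < m z := by
    by_contra hcon
    push_neg at hcon
    have hg : ∀ β, HasDerivAt (fun β => β * m z - Real.log (S β)) (m z - E β) β := by
      intro β
      have h := ((hasDerivAt_id β).mul_const (m z)).fun_sub ((hSd β).log (hSpos β).ne')
      rw [hE_eq β]
      simpa using h
    have hanti : Antitone (fun β => β * m z - Real.log (S β)) := by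
      apply antitone_of_deriv_nonpos
      · exact fun β => (hg β).differentiableAt
      · intro β
        rw [(hg β).deriv]
        linarith [hcon β]
    have hd : 0 < m z - m w1 := sub_pos.mpr hw1
    set β1 := min 0 ((Real.log (p w1) - 1) / (m z - m w1)) with hβ1
    have h1 : 0 ≤ β1 * m z - Real.log (S β1) := by
      have := hanti (min_le_left 0 ((Real.log (p w1) - 1) / (m z - m w1)))
      simpa [hS0] using this
    have h2 : p w1 * Real.exp (β1 * m w1) ≤ S β1 := by
      show _ ≤ ∑ w, p w * Real.exp (β1 * m w)
      exact Finset.single_le_sum (f := fun w => p w * Real.exp (β1 * m w))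
        (fun w _ => le_of_lt (mul_pos (hp w) (Real.exp_pos _))) (Finset.mem_univ w1)
    have h3 : Real.log (p w1) + β1 * m w1 ≤ Real.log (S β1) := by
      have hlog := Real.log_le_log (mul_pos (hp w1) (Real.exp_pos _)) h2
      rwa [Real.log_mul (hp w1).ne' (Real.exp_pos _).ne', Real.log_exp] at hlog
    have h4 : β1 * (m z - m w1) ≤ Real.log (p w1) - 1 :=
      (le_div_iff₀ hd).mp (min_le_right _ _)
    nlinarith [h1, h3, h4]
  obtain ⟨βl, hβl⟩ := hb1
  obtain ⟨βu, hβu⟩ := hb2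
  have hlu : βl ≤ βu := by
    by_contra h
    push_neg at h
    have := hEmono h
    linarith
  obtain ⟨αs, _, hαs⟩ := intermediate_value_Icc hlu hEcont.continuousOn ⟨hβl.le, hβu.le⟩
  have hiff : ∀ β, E β = m z ↔ β = αs := fun β =>
    ⟨fun h => hEmono.injective (h.trans hαs.symm), fun h => h ▸ hαs⟩
  have hq_pos : ∀ β, 0 < q β z := fun β => div_pos (mul_pos (hp z) (Real.exp_pos _)) (hSpos β)
  have hΔd : ∀ β, HasDerivAt Δ (q β z * (m z - E β)) β := by
    intro β
    have h : HasDerivAt (fun β => p z * Real.exp (β * m z) / S β)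
        ((p z * m z * Real.exp (β * m z) * S β - p z * Real.exp (β * m z) * T β) / (S β) ^ 2)
        β := (hterm z β).div (hSd β) (hSpos β).ne'
    have key : q β z * (m z - E β) =
        (p z * m z * Real.exp (β * m z) * S β - p z * Real.exp (β * m z) * T β) / (S β) ^ 2 := by
      show p z * Real.exp (β * m z) / S β * (m z - E β) = _
      rw [hE_eq β]
      have := (hSpos β).ne'
      field_simp
    rw [key]
    exact h.sub_const (p z)
  have hΔdiff : Differentiable ℝ Δ := fun β => (hΔd β).differentiableAt
  have hΔcont : Continuous Δ := hΔdiff.continuous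
  have hmono : StrictMonoOn Δ (Set.Iic αs) := by
    apply strictMonoOn_of_deriv_pos (convex_Iic αs) hΔcont.continuousOn
    intro x hx
    rw [interior_Iic] at hx
    rw [(hΔd x).deriv]
    have hEx : E x < m z := hαs ▸ hEmono hx
    exact mul_pos (hq_pos x) (sub_pos.mpr hEx)
  have hanti : AntitoneOn Δ (Set.Ici αs) := by
    apply antitoneOn_of_deriv_nonpos (convex_Ici αs) hΔcont.continuousOn
    · exact fun x _ => (hΔd x).differentiableAt.differentiableWithinAt
    · intro x hx
      rw [interior_Ici] at hx
      rw [(hΔd x).deriv]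
      have hEx : m z < E x := hαs ▸ hEmono hx
      have := hq_pos x
      nlinarith
  exact ⟨αs, ⟨⟨hmono, hanti⟩, hiff⟩, fun y hy => ((hy.2 αs).mp hαs).symm⟩
end

section
/- Concept probability is a logistic function: let q_α be the exponential tilting of p by α m, and C ⊆ [V]. Define F(α) = Σ_{z∈C} q_α(z). Then F satisfies the ODE F'(α) = F(α)(1−F(α))(μ_C(α) − μ_{C^c}(α)), where μ_C(α) = Σ_{z∈C} q_α(z)m_z / F(α) and μ_{C^c}(α) = Σ_{z∉C} q_α(z)m_z / (1−F(α)). Consequently F(α) = φ(r + ν(α)) where φ is the logistic sigmoid, r = log(F(0)/(1−F(0))) and ν(α) = ∫_0^α (μ_C(t) − μ_{C^c}(t)) dt. -/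
/-- The concept mass under tilting satisfies a logistic ODE and is a reparametrized sigmoid. -/
theorem concept_mass_logistic (V : ℕ) (hV : 2 ≤ V) (p m : Fin V → ℝ)
    (hp : ∀ z, 0 < p z) (hsum : ∑ z, p z = 1)
    (C : Finset (Fin V)) (hC1 : C.Nonempty) (hC2 : C ≠ Finset.univ) :
    let q : ℝ → Fin V → ℝ :=
      fun β w => p w * Real.exp (β * m w) / (∑ z', p z' * Real.exp (β * m z'))
    let F : ℝ → ℝ := fun β => ∑ z ∈ C, q β z
    let μC : ℝ → ℝ := fun β => (∑ z ∈ C, q β z * m z) / F β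
    let μCc : ℝ → ℝ := fun β => (∑ z ∈ Cᶜ, q β z * m z) / (1 - F β)
    (∀ α, HasDerivAt F (F α * (1 - F α) * (μC α - μCc α)) α) ∧
    (∀ α, F α = 1 / (1 + Real.exp (-(Real.log (F 0 / (1 - F 0)) +
        ∫ t in (0:ℝ)..α, (μC t - μCc t))))) := by
  intro q F μC μCc
  set Z : ℝ → ℝ := fun β => ∑ z', p z' * Real.exp (β * m z') with hZdef
  set S : ℝ → ℝ := fun β => ∑ z ∈ C, p z * Real.exp (β * m z) with hSdef
  set Z' : ℝ → ℝ := fun β => ∑ z, p z * m z * Real.exp (β * m z) with hZ'def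
  set S' : ℝ → ℝ := fun β => ∑ z ∈ C, p z * m z * Real.exp (β * m z) with hS'def
  have hZpos : ∀ β, 0 < Z β := by
    intro β
    apply Finset.sum_pos (fun z _ => mul_pos (hp z) (Real.exp_pos _))
    exact ⟨⟨0, by omega⟩, Finset.mem_univ _⟩
  have hSpos : ∀ β, 0 < S β := by
    intro β
    exact Finset.sum_pos (fun z _ => mul_pos (hp z) (Real.exp_pos _)) hC1
  have hCc : Cᶜ.Nonempty := by
    rw [← Finset.card_pos, Finset.card_compl]
    have := Finset.card_lt_card (lt_of_le_of_ne (Finset.subset_univ C) hC2)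
    simp at this ⊢
    omega
  have hsplit : ∀ β, S β + (∑ z ∈ Cᶜ, p z * Real.exp (β * m z)) = Z β := by
    intro β; exact Finset.sum_add_sum_compl C _
  have hsplit' : ∀ β, S' β + (∑ z ∈ Cᶜ, p z * m z * Real.exp (β * m z)) = Z' β := by
    intro β; exact Finset.sum_add_sum_compl C _
  have hSZ : ∀ β, S β < Z β := by
    intro β
    have h := hsplit β
    have : 0 < ∑ z ∈ Cᶜ, p z * Real.exp (β * m z) :=
      Finset.sum_pos (fun z _ => mul_pos (hp z) (Real.exp_pos _)) hCc
    linarith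
  have hFeq : ∀ β, F β = S β / Z β := by
    intro β
    simp only [F, q, S, Z, Finset.sum_div]
  have hF0 : ∀ β, 0 < F β := by
    intro β; rw [hFeq]; exact div_pos (hSpos β) (hZpos β)
  have hF1 : ∀ β, F β < 1 := by
    intro β; rw [hFeq]; exact (div_lt_one (hZpos β)).2 (hSZ β)
  -- sums with m
  have hqmC : ∀ β, (∑ z ∈ C, q β z * m z) = S' β / Z β := by
    intro β
    simp only [q, S', Finset.sum_div]
    exact Finset.sum_congr rfl (fun z _ => by ring)
  have hqmCc : ∀ β, (∑ z ∈ Cᶜ, q β z * m z) = (Z' β - S' β) / Z β := by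
    intro β
    have : (∑ z ∈ Cᶜ, q β z * m z) = (∑ z ∈ Cᶜ, p z * m z * Real.exp (β * m z)) / Z β := by
      simp only [q, Finset.sum_div]
      exact Finset.sum_congr rfl (fun z _ => by ring)
    rw [this, ← hsplit' β, add_sub_cancel_left]
  have hZne : ∀ β, Z β ≠ 0 := fun β => (hZpos β).ne'
  have hSne : ∀ β, S β ≠ 0 := fun β => (hSpos β).ne'
  have hZSne : ∀ β, Z β - S β ≠ 0 := fun β => (sub_pos.2 (hSZ β)).ne'
  have hμCeq : ∀ β, μC β = S' β / S β := by
    intro β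
    simp only [μC, hqmC β, hFeq β]
    rw [div_div_div_cancel_right₀]
    exact hZne β
  have hμCceq : ∀ β, μCc β = (Z' β - S' β) / (Z β - S β) := by
    intro β
    simp only [μCc, hqmCc β, hFeq β]
    rw [show 1 - S β / Z β = (Z β - S β) / Z β by field_simp [hZne β]]
    rw [div_div_div_cancel_right₀]
    exact hZne β
  -- derivatives
  have hSd : ∀ β, HasDerivAt S (S' β) β := by
    intro β
    have : ∀ z ∈ C, HasDerivAt (fun x => p z * Real.exp (x * m z))
        (p z * m z * Real.exp (β * m z)) β := by
      intro z _
      have h1 : HasDerivAt (fun x : ℝ => x * m z) (m z) β := by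
        simpa using (hasDerivAt_id β).mul_const (m z)
      have := (h1.exp).const_mul (p z)
      exact this.congr_deriv (by ring)
    simpa using HasDerivAt.fun_sum this
  have hZd : ∀ β, HasDerivAt Z (Z' β) β := by
    intro β
    have : ∀ z ∈ (Finset.univ : Finset (Fin V)), HasDerivAt (fun x => p z * Real.exp (x * m z))
        (p z * m z * Real.exp (β * m z)) β := by
      intro z _
      have h1 : HasDerivAt (fun x : ℝ => x * m z) (m z) β := by
        simpa using (hasDerivAt_id β).mul_const (m z)
      have := (h1.exp).const_mul (p z)
      exact this.congr_deriv (by ring)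
    simpa using HasDerivAt.fun_sum this
  have hFfun : F = fun β => S β / Z β := funext hFeq
  have hFd : ∀ β, HasDerivAt F ((S' β * Z β - S β * Z' β) / (Z β) ^ 2) β := by
    intro β
    rw [hFfun]
    exact (hSd β).div (hZd β) (hZne β)
  have hval : ∀ β, F β * (1 - F β) * (μC β - μCc β)
      = (S' β * Z β - S β * Z' β) / (Z β) ^ 2 := by
    intro β
    rw [hFeq, hμCeq, hμCceq]
    field_simp [hZne β, hSne β, hZSne β]
    ring
  constructor
  · intro α
    rw [hval α]
    exact hFd α
  · -- second part
    set D : ℝ → ℝ := fun β => S' β / S β - (Z' β - S' β) / (Z β - S β) with hDdef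
    have hμD : ∀ β, μC β - μCc β = D β := by
      intro β; rw [hμCeq, hμCceq]
    set G : ℝ → ℝ := fun β => Real.log (F β) - Real.log (1 - F β) with hGdef
    have hGfun : G = fun β => Real.log (S β) - Real.log (Z β - S β) := by
      funext β
      simp only [G]
      rw [hFeq β, show (1:ℝ) - S β / Z β = (Z β - S β) / Z β by field_simp [hZne β],
        Real.log_div (hSne β) (hZne β), Real.log_div (hZSne β) (hZne β)]
      ring
    have hGd : ∀ β, HasDerivAt G (D β) β := by
      intro β
      rw [hGfun]
      exact ((hSd β).log (hSne β)).sub (((hZd β).sub (hSd β)).log (hZSne β))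
    have hScont : Continuous S := by
      apply continuous_finset_sum
      intro z _
      exact continuous_const.mul (Real.continuous_exp.comp (continuous_id.mul continuous_const))
    have hZcont : Continuous Z := by
      apply continuous_finset_sum
      intro z _
      exact continuous_const.mul (Real.continuous_exp.comp (continuous_id.mul continuous_const))
    have hS'cont : Continuous S' := by
      apply continuous_finset_sum
      intro z _
      exact continuous_const.mul (Real.continuous_exp.comp (continuous_id.mul continuous_const))
    have hZ'cont : Continuous Z' := by
      apply continuous_finset_sum
      intro z _
      exact continuous_const.mul (Real.continuous_exp.comp (continuous_id.mul continuous_const))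
    have hDcont : Continuous D := by
      apply Continuous.sub
      · exact hS'cont.div hScont hSne
      · exact (hZ'cont.sub hS'cont).div (hZcont.sub hScont) hZSne
    have hint : ∀ α, (∫ t in (0:ℝ)..α, (μC t - μCc t)) = G α - G 0 := by
      intro α
      simp only [hμD]
      exact intervalIntegral.integral_eq_sub_of_hasDerivAt (fun t _ => hGd t)
        (hDcont.intervalIntegrable 0 α)
    intro α
    rw [hint α]
    have hlog0 : Real.log (F 0 / (1 - F 0)) = G 0 := by
      rw [Real.log_div (hF0 0).ne' (by linarith [hF1 0])]
    rw [hlog0]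
    have : G 0 + (G α - G 0) = G α := by ring
    rw [this]
    have hGα : G α = Real.log (F α / (1 - F α)) := by
      rw [Real.log_div (hF0 α).ne' (by linarith [hF1 α])]
    rw [hGα, Real.exp_neg, Real.exp_log (div_pos (hF0 α) (by linarith [hF1 α]))]
    rw [inv_div]
    have h1 : 0 < F α := hF0 α
    have h2 : F α < 1 := hF1 α
    field_simp
    ring
end

section
/- Increasing target concept mass: let q_α be the exponential tilting of p by α m, and C ⊆ [V] nonempty and proper. If m_z > 0 for all z ∈ C and m_z ≤ 0 for all z ∉ C, then α ↦ Σ_{z∈C} q_α(z) is strictly increasing on R. -/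
/-- Target concept mass is strictly increasing in the steering strength. -/
theorem target_concept_increasing (V : ℕ) (hV : 2 ≤ V) (p m : Fin V → ℝ)
    (hp : ∀ z, 0 < p z) (hsum : ∑ z, p z = 1)
    (C : Finset (Fin V)) (hC1 : C.Nonempty) (hC2 : C ≠ Finset.univ)
    (hpos : ∀ z ∈ C, 0 < m z) (hneg : ∀ z ∉ C, m z ≤ 0) :
    StrictMono (fun β : ℝ =>
      ∑ z ∈ C, p z * Real.exp (β * m z) / (∑ z', p z' * Real.exp (β * m z'))) := by
  intro a b hab
  simp only
  have hCc : (Cᶜ : Finset (Fin V)).Nonempty := by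
    by_contra h
    rw [Finset.not_nonempty_iff_eq_empty, Finset.compl_eq_empty_iff] at h
    exact hC2 h
  set A := fun β : ℝ => ∑ z ∈ C, p z * Real.exp (β * m z) with hAdef
  set B := fun β : ℝ => ∑ z ∈ Cᶜ, p z * Real.exp (β * m z) with hBdef
  have hS : ∀ β : ℝ, (∑ z', p z' * Real.exp (β * m z')) = A β + B β := by
    intro β
    rw [hAdef, hBdef]
    exact (Finset.sum_add_sum_compl C _).symm
  have hApos : ∀ β, 0 < A β := fun β =>
    Finset.sum_pos (fun z _ => mul_pos (hp z) (Real.exp_pos _)) hC1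
  have hBpos : ∀ β, 0 < B β := fun β =>
    Finset.sum_pos (fun z _ => mul_pos (hp z) (Real.exp_pos _)) hCc
  have hA : A a < A b := by
    refine Finset.sum_lt_sum_of_nonempty hC1 (fun z hz => ?_)
    have hm := hpos z hz
    have : a * m z < b * m z := by nlinarith
    exact mul_lt_mul_of_pos_left (Real.exp_lt_exp.mpr this) (hp z)
  have hB : B b ≤ B a := by
    refine Finset.sum_le_sum (fun z hz => ?_)
    have hm := hneg z (Finset.mem_compl.mp hz)
    have : b * m z ≤ a * m z := by nlinarith
    exact mul_le_mul_of_nonneg_left (Real.exp_le_exp.mpr this) (hp z).le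
  have key : A a * B b < A b * B a := by
    have h1 : A a * B b < A b * B b := by nlinarith [hBpos b]
    have h2 : A b * B b ≤ A b * B a := by nlinarith [hApos b]
    linarith
  rw [← Finset.sum_div, ← Finset.sum_div, hS a, hS b]
  show A a / (A a + B a) < A b / (A b + B b)
  rw [div_lt_div_iff₀ (by linarith [hApos a, hBpos a]) (by linarith [hApos b, hBpos b])]
  nlinarith
end
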